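/- arXiv:1511.01798 — 8 statements merged into one kernel-verified Lean document; each statement's English description precedes it below -/
import Mathlib

section
/- There exist a constant M_j ≥ 0 independent of s and an integer s_j ≥ 1 such that for all integers s ≥ s_j, |R_s(γ*_s) − R_s(γ_{j,s})| ≤ q_s · M_j / s^{(j+1)/2}. -/
/-!
Dropping the term of order `s^{-(j+1)/2}` from the expansion costs `O(q_s / s^{(j+1)/2})`
uniformly on `Γ`, so `R_s` is uniformly that close to `n_s + q_s · Σ_{i ≤ j} R_i / s^{i/2}`.
Since `γ_{j,s}` maximizes the latter and `γ*_s` the former, comparing the two objectives at both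
points bounds the gap `R_s(γ*_s) - R_s(γ_{j,s}) ≥ 0` by twice that error.
-/

open Set Finset

theorem IsMaxOn.abs_sub_le_of_abs_sub_affine_le {α : Type*} {f g : α → ℝ} {s : Set α} {x y : α}
    {a c ε : ℝ} (ha : 0 ≤ a) (hx : x ∈ s) (hy : y ∈ s) (hfx : IsMaxOn f s x)
    (hgy : IsMaxOn g s y) (hfg : ∀ z ∈ s, |f z - c - a * g z| ≤ ε) :
    |f x - f y| ≤ 2 * ε := by
  have hgxy : a * g x ≤ a * g y := mul_le_mul_of_nonneg_left (hgy hx) ha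
  rw [abs_of_nonneg (sub_nonneg.mpr (hfx hy))]
  linarith [(abs_le.mp (hfg x hx)).2, (abs_le.mp (hfg y hy)).1]

theorem abs_sub_mul_sum_range_le_of_succ {x c q C B t : ℝ} {n : ℕ} {a : ℕ → ℝ}
    (ht : 1 ≤ t) (hq : 0 ≤ q)
    (h : |x - c - q * ∑ i ∈ range (n + 2), a i / t ^ i| ≤ C * q / t ^ (n + 2))
    (hB : |a (n + 1)| ≤ B) :
    |x - c - q * ∑ i ∈ range (n + 1), a i / t ^ i| ≤ (|C| + B) * q / t ^ (n + 1) := by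
  have htn : 0 < t ^ (n + 1) := by positivity
  have hlast : |q * (a (n + 1) / t ^ (n + 1))| ≤ B * q / t ^ (n + 1) := by
    rw [abs_mul, abs_of_nonneg hq, abs_div, abs_of_pos htn, mul_div_assoc', mul_comm q]
    gcongr
  have hC : C * q / t ^ (n + 2) ≤ |C| * q / t ^ (n + 1) :=
    calc C * q / t ^ (n + 2) ≤ |C| * q / t ^ (n + 2) := by gcongr; exact le_abs_self C
      _ ≤ |C| * q / t ^ (n + 1) := by gcongr; omega
  rw [sum_range_succ] at h
  calc |x - c - q * ∑ i ∈ range (n + 1), a i / t ^ i|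
      = |(x - c - q * (∑ i ∈ range (n + 1), a i / t ^ i + a (n + 1) / t ^ (n + 1)))
          + q * (a (n + 1) / t ^ (n + 1))| := by congr 1; ring
    _ ≤ (|C| + B) * q / t ^ (n + 1) := by
        rw [add_mul, add_div]
        exact (abs_add_le _ _).trans (add_le_add (h.trans hC) hlast)

theorem stmt_0_general (j : ℕ) (γl γr : ℝ)
    (Rs : ℕ → ℝ → ℝ) (ns qs : ℕ → ℝ) (hq : ∀ s : ℕ, 1 ≤ s → 0 < qs s)
    (R : ℕ → ℝ → ℝ)
    (hRj1bdd : ∃ B : ℝ, ∀ γ ∈ Icc γl γr,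
      |R (j + 1) γ| ≤ B ∧ |deriv (R (j + 1)) γ| ≤ B)
    (C : ℝ)
    (happrox : ∀ s : ℕ, 1 ≤ s → ∀ γ ∈ Icc γl γr,
      |Rs s γ - ns s - qs s * ∑ i ∈ Finset.range (j + 2), R i γ / Real.sqrt s ^ i|
        ≤ C * qs s / Real.sqrt s ^ (j + 2) ∧
      |deriv (Rs s) γ - qs s * ∑ i ∈ Finset.range (j + 2), deriv (R i) γ / Real.sqrt s ^ i|
        ≤ C * qs s / Real.sqrt s ^ (j + 2))
    (γstar : ℕ → ℝ)
    (hγstar : ∀ s : ℕ, 1 ≤ s → γstar s ∈ Ioo γl γr ∧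
      IsMaxOn (Rs s) (Icc γl γr) (γstar s) ∧
      ∀ γ ∈ Icc γl γr, IsMaxOn (Rs s) (Icc γl γr) γ → γ = γstar s)
    (γj : ℕ → ℝ) (s1 : ℕ)
    (hγj : ∀ s : ℕ, s1 ≤ s → γj s ∈ Icc γl γr ∧
      IsMaxOn (fun γ => ∑ i ∈ Finset.range (j + 1), R i γ / Real.sqrt s ^ i)
        (Icc γl γr) (γj s) ∧
      ∀ γ ∈ Icc γl γr,
        IsMaxOn (fun γ' => ∑ i ∈ Finset.range (j + 1), R i γ' / Real.sqrt s ^ i)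
          (Icc γl γr) γ → γ = γj s) :
    ∃ (M : ℝ) (sj : ℕ), 0 ≤ M ∧ 1 ≤ sj ∧ ∀ s : ℕ, sj ≤ s →
      |Rs s (γstar s) - Rs s (γj s)| ≤ qs s * M / Real.sqrt s ^ (j + 1) := by
  obtain ⟨B, hB⟩ := hRj1bdd
  refine ⟨2 * (|C| + |B|), max s1 1, by positivity, le_max_right _ _, fun s hs => ?_⟩
  have hs1 : 1 ≤ s := le_of_max_le_right hs
  have hsqrt : 1 ≤ Real.sqrt s := Real.one_le_sqrt.mpr (by exact_mod_cast hs1)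
  obtain ⟨hstar_mem, hstar_max, -⟩ := hγstar s hs1
  obtain ⟨hj_mem, hj_max, -⟩ := hγj s (le_of_max_le_left hs)
  have hgap := hstar_max.abs_sub_le_of_abs_sub_affine_le (hq s hs1).le
    (Ioo_subset_Icc_self hstar_mem) hj_mem hj_max fun γ hγ =>
      abs_sub_mul_sum_range_le_of_succ hsqrt (hq s hs1).le (happrox s hs1 γ hγ).1
        ((hB γ hγ).1.trans (le_abs_self B))
  exact hgap.trans_eq (by ring)

/-- Optimality gap in objective value (Theorem 1, first claim). -/
theorem stmt_0 (j : ℕ) (γl γr : ℝ) (hlr : γl < γr)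
    (Rs : ℕ → ℝ → ℝ) (ns qs : ℕ → ℝ) (hq : ∀ s : ℕ, 1 ≤ s → 0 < qs s)
    (R : ℕ → ℝ → ℝ)
    (hRdiff : ∀ i ≤ j, ∀ γ ∈ Icc γl γr,
      DifferentiableAt ℝ (R i) γ ∧ DifferentiableAt ℝ (deriv (R i)) γ)
    (hRbdd : ∀ i ≤ j, ∃ B : ℝ, ∀ γ ∈ Icc γl γr,
      |R i γ| ≤ B ∧ |deriv (R i) γ| ≤ B ∧ |deriv (deriv (R i)) γ| ≤ B)
    (hRj1diff : ∀ γ ∈ Icc γl γr, DifferentiableAt ℝ (R (j + 1)) γ)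
    (hRj1bdd : ∃ B : ℝ, ∀ γ ∈ Icc γl γr,
      |R (j + 1) γ| ≤ B ∧ |deriv (R (j + 1)) γ| ≤ B)
    (hRsdiff : ∀ s : ℕ, 1 ≤ s → ∀ γ ∈ Icc γl γr, DifferentiableAt ℝ (Rs s) γ)
    (C : ℝ)
    (happrox : ∀ s : ℕ, 1 ≤ s → ∀ γ ∈ Icc γl γr,
      |Rs s γ - ns s - qs s * ∑ i ∈ Finset.range (j + 2), R i γ / Real.sqrt s ^ i|
        ≤ C * qs s / Real.sqrt s ^ (j + 2) ∧
      |deriv (Rs s) γ - qs s * ∑ i ∈ Finset.range (j + 2), deriv (R i) γ / Real.sqrt s ^ i|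
        ≤ C * qs s / Real.sqrt s ^ (j + 2))
    (hR0cont : ContinuousOn (deriv (deriv (R 0))) (Icc γl γr))
    (hR0neg : ∀ γ ∈ Icc γl γr, deriv (deriv (R 0)) γ < 0)
    (γ0 : ℝ) (hγ0 : γ0 ∈ Ioo γl γr)
    (hγ0max : IsMaxOn (R 0) (Icc γl γr) γ0)
    (hγ0uniq : ∀ γ ∈ Icc γl γr, IsMaxOn (R 0) (Icc γl γr) γ → γ = γ0)
    (γstar : ℕ → ℝ)
    (hγstar : ∀ s : ℕ, 1 ≤ s → γstar s ∈ Ioo γl γr ∧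
      IsMaxOn (Rs s) (Icc γl γr) (γstar s) ∧
      ∀ γ ∈ Icc γl γr, IsMaxOn (Rs s) (Icc γl γr) γ → γ = γstar s)
    (γj : ℕ → ℝ) (s1 : ℕ)
    (hγj : ∀ s : ℕ, s1 ≤ s → γj s ∈ Icc γl γr ∧
      IsMaxOn (fun γ => ∑ i ∈ Finset.range (j + 1), R i γ / Real.sqrt s ^ i)
        (Icc γl γr) (γj s) ∧
      ∀ γ ∈ Icc γl γr,
        IsMaxOn (fun γ' => ∑ i ∈ Finset.range (j + 1), R i γ' / Real.sqrt s ^ i)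
          (Icc γl γr) γ → γ = γj s) :
    ∃ (M : ℝ) (sj : ℕ), 0 ≤ M ∧ 1 ≤ sj ∧ ∀ s : ℕ, sj ≤ s →
      |Rs s (γstar s) - Rs s (γj s)| ≤ qs s * M / Real.sqrt s ^ (j + 1) :=
  stmt_0_general j γl γr Rs ns qs hq R hRj1bdd C happrox γstar hγstar γj s1 hγj
end

section
/- There exist a constant K_j ≥ 0 independent of s and an integer s_j ≥ 1 such that for all integers s ≥ s_j, |γ_{j,s} − γ*_s| ≤ K_j / s^{(j+1)/2}. -/
/-!
Write `F_s = ∑_{i ≤ j} R_i / s^{i/2}`. Its second derivative is `R_0'' + O(s^{-1/2})`, so for large `s`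
it is bounded above by `-c/2`, where `-c` is the maximum of `R_0''` on the compact interval `Γ`.
At the interior maximiser `γ*_s` of `R_s` we have `R_s'(γ*_s) = 0`, and the derivative expansion
then gives `|F_s'(γ*_s)| = O(s^{-(j+1)/2})`. Strong concavity of `F_s` together with the
first-order condition at its maximiser `γ_{j,s}` yields `(c/2) |γ_{j,s} - γ*_s| ≤ |F_s'(γ*_s)|`.
-/

open Set Finset Filter

theorem IsCompact.exists_pos_forall_le_neg {X : Type*} [TopologicalSpace X] {s : Set X}
    {φ : X → ℝ} (hs : IsCompact s) (hφ : ContinuousOn φ s) (hneg : ∀ x ∈ s, φ x < 0) :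
    ∃ c > 0, ∀ x ∈ s, φ x ≤ -c := by
  rcases s.eq_empty_or_nonempty with rfl | hne
  · exact ⟨1, one_pos, by simp⟩
  obtain ⟨m, hm, hmax⟩ := hs.exists_isMaxOn hne hφ
  exact ⟨-φ m, neg_pos.2 (hneg m hm), fun x hx => by simpa using hmax hx⟩

theorem IsMaxOn.hasDerivAt_mul_sub_nonpos {f : ℝ → ℝ} {s : Set ℝ} {a b f' : ℝ}
    (hs : Convex ℝ s) (hmax : IsMaxOn f s a) (hf : HasDerivAt f f' a) (ha : a ∈ s) (hb : b ∈ s) :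
    f' * (b - a) ≤ 0 := by
  have h := hmax.localize.hasFDerivWithinAt_nonpos hf.hasFDerivAt.hasFDerivWithinAt
    (sub_mem_posTangentConeAt_of_segment_subset (hs.segment_subset ha hb))
  simpa [mul_comm] using h

theorem sub_mul_sub_le_of_hasDerivAt_le_neg {g h : ℝ → ℝ} {s : Set ℝ} {a b c : ℝ}
    (hs : Convex ℝ s) (hg : ∀ x ∈ s, HasDerivAt g (h x) x) (hh : ∀ x ∈ s, h x ≤ -c)
    (ha : a ∈ s) (hb : b ∈ s) : (g b - g a) * (b - a) ≤ -c * (b - a) ^ 2 := by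
  have hg' : ∀ x ∈ s, HasDerivAt (fun y => g y + c * y) (h x + c) x := fun x hx =>
    (hg x hx).add ((hasDerivAt_id x).const_mul c |>.congr_deriv (mul_one c))
  have hanti : AntitoneOn (fun y => g y + c * y) s :=
    antitoneOn_of_hasDerivWithinAt_nonpos hs
      (fun x hx => (hg' x hx).continuousAt.continuousWithinAt)
      (fun x hx => (hg' x (interior_subset hx)).hasDerivWithinAt)
      (fun x hx => by linarith [hh x (interior_subset hx)])
  have := (antivaryOn_id_iff.2 hanti).sub_mul_sub_nonpos ha hb
  simp only [id] at this
  linear_combination this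

theorem IsMaxOn.mul_abs_sub_le_abs_deriv {f g h : ℝ → ℝ} {s : Set ℝ} {a b c : ℝ}
    (hs : Convex ℝ s) (hmax : IsMaxOn f s a) (ha : a ∈ s) (hb : b ∈ s)
    (hf : ∀ x ∈ s, HasDerivAt f (g x) x) (hg : ∀ x ∈ s, HasDerivAt g (h x) x)
    (hh : ∀ x ∈ s, h x ≤ -c) : c * |a - b| ≤ |g b| := by
  have hfoc := hmax.hasDerivAt_mul_sub_nonpos hs (hf a ha) ha hb
  have hconc := sub_mul_sub_le_of_hasDerivAt_le_neg hs hg hh ha hb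
  rcases eq_or_ne a b with rfl | hab
  · simp
  have hpos : 0 < |a - b| := abs_pos.2 (sub_ne_zero.2 hab)
  refine le_of_mul_le_mul_right ?_ hpos
  calc c * |a - b| * |a - b| = c * (b - a) ^ 2 := by rw [mul_assoc, abs_mul_abs_self]; ring
    _ ≤ -(g b * (b - a)) := by linarith
    _ ≤ |g b| * |a - b| := by rw [abs_sub_comm, ← abs_mul]; exact neg_le_abs _

theorem hasDerivAt_sum_range_div_pow {F : ℕ → ℝ → ℝ} {n : ℕ} {x γ : ℝ}
    (hF : ∀ i < n, DifferentiableAt ℝ (F i) γ) :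
    HasDerivAt (fun y => ∑ i ∈ range n, F i y / x ^ i) (∑ i ∈ range n, deriv (F i) γ / x ^ i) γ :=
  HasDerivAt.fun_sum fun i hi => (hF i (mem_range.1 hi)).hasDerivAt.div_const _

theorem sum_range_succ_div_pow_le_neg_half {v : ℕ → ℝ} {n : ℕ} {B c x : ℝ} (hc : 0 < c)
    (hx : 1 ≤ x) (hxB : 2 * n * B / c ≤ x) (h0 : v 0 ≤ -c)
    (hv : ∀ i, 1 ≤ i → i ≤ n → |v i| ≤ B) :
    ∑ i ∈ range (n + 1), v i / x ^ i ≤ -(c / 2) := by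
  have hx0 : 0 < x := one_pos.trans_le hx
  have htail : ∑ i ∈ range n, v (i + 1) / x ^ (i + 1) ≤ n * (B / x) := by
    calc ∑ i ∈ range n, v (i + 1) / x ^ (i + 1) ≤ ∑ _i ∈ range n, B / x := by
          refine sum_le_sum fun i hi => ?_
          have hvi := hv (i + 1) (by omega) (by have := mem_range.1 hi; omega)
          calc v (i + 1) / x ^ (i + 1) ≤ |v (i + 1)| / x ^ (i + 1) := by
                gcongr; exact le_abs_self _
            _ ≤ B / x ^ 1 := by
                gcongr
                · exact (abs_nonneg _).trans hvi
                · omega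
            _ = B / x := by rw [pow_one]
      _ = n * (B / x) := by rw [sum_const, card_range, nsmul_eq_mul]
  have hsmall : n * (B / x) ≤ c / 2 := by
    rw [div_le_iff₀ hc] at hxB
    rw [← mul_div_assoc, div_le_iff₀ hx0]
    linarith
  rw [sum_range_succ', pow_zero, div_one]
  linarith

theorem abs_sum_range_div_pow_le_of_abs_mul_sum_le {u : ℕ → ℝ} {n : ℕ} {q x C B : ℝ}
    (hq : 0 < q) (hx : 1 ≤ x)
    (h : |q * ∑ i ∈ range (n + 1), u i / x ^ i| ≤ C * q / x ^ (n + 1)) (hu : |u n| ≤ B) :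
    |∑ i ∈ range n, u i / x ^ i| ≤ (|C| + |B|) / x ^ n := by
  have hxn : 0 < x ^ n := pow_pos (one_pos.trans_le hx) n
  have hfull : |∑ i ∈ range (n + 1), u i / x ^ i| ≤ |C| / x ^ n := by
    rw [abs_mul, abs_of_pos hq, mul_div_right_comm, mul_comm q] at h
    calc _ ≤ C / x ^ (n + 1) := le_of_mul_le_mul_right h hq
      _ ≤ |C| / x ^ (n + 1) := by gcongr; exact le_abs_self C
      _ ≤ |C| / x ^ n :=
          div_le_div_of_nonneg_left (abs_nonneg C) hxn (pow_le_pow_right₀ hx n.le_succ)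
  have hlast : |u n / x ^ n| ≤ |B| / x ^ n := by
    rw [abs_div, abs_of_pos hxn]
    exact div_le_div_of_nonneg_right (hu.trans (le_abs_self B)) hxn.le
  rw [sum_range_succ] at hfull
  calc |∑ i ∈ range n, u i / x ^ i|
      = |(∑ i ∈ range n, u i / x ^ i + u n / x ^ n) - u n / x ^ n| := by rw [add_sub_cancel_right]
    _ ≤ |C| / x ^ n + |B| / x ^ n := (abs_sub _ _).trans (add_le_add hfull hlast)
    _ = (|C| + |B|) / x ^ n := by ring

theorem stmt_1_general (j : ℕ) (γl γr : ℝ)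
    (Rs : ℕ → ℝ → ℝ) (ns qs : ℕ → ℝ) (hq : ∀ s : ℕ, 1 ≤ s → 0 < qs s)
    (R : ℕ → ℝ → ℝ)
    (hRdiff : ∀ i ≤ j, ∀ γ ∈ Icc γl γr,
      DifferentiableAt ℝ (R i) γ ∧ DifferentiableAt ℝ (deriv (R i)) γ)
    (hRbdd : ∀ i ≤ j, ∃ B : ℝ, ∀ γ ∈ Icc γl γr,
      |R i γ| ≤ B ∧ |deriv (R i) γ| ≤ B ∧ |deriv (deriv (R i)) γ| ≤ B)
    (hRj1bdd : ∃ B : ℝ, ∀ γ ∈ Icc γl γr,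
      |R (j + 1) γ| ≤ B ∧ |deriv (R (j + 1)) γ| ≤ B)
    (C : ℝ)
    (happrox : ∀ s : ℕ, 1 ≤ s → ∀ γ ∈ Icc γl γr,
      |Rs s γ - ns s - qs s * ∑ i ∈ Finset.range (j + 2), R i γ / Real.sqrt s ^ i|
        ≤ C * qs s / Real.sqrt s ^ (j + 2) ∧
      |deriv (Rs s) γ - qs s * ∑ i ∈ Finset.range (j + 2), deriv (R i) γ / Real.sqrt s ^ i|
        ≤ C * qs s / Real.sqrt s ^ (j + 2))
    (hR0cont : ContinuousOn (deriv (deriv (R 0))) (Icc γl γr))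
    (hR0neg : ∀ γ ∈ Icc γl γr, deriv (deriv (R 0)) γ < 0)
    (γstar : ℕ → ℝ)
    (hγstar : ∀ s : ℕ, 1 ≤ s → γstar s ∈ Ioo γl γr ∧
      IsMaxOn (Rs s) (Icc γl γr) (γstar s) ∧
      ∀ γ ∈ Icc γl γr, IsMaxOn (Rs s) (Icc γl γr) γ → γ = γstar s)
    (γj : ℕ → ℝ) (s1 : ℕ)
    (hγj : ∀ s : ℕ, s1 ≤ s → γj s ∈ Icc γl γr ∧
      IsMaxOn (fun γ => ∑ i ∈ Finset.range (j + 1), R i γ / Real.sqrt s ^ i)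
        (Icc γl γr) (γj s) ∧
      ∀ γ ∈ Icc γl γr,
        IsMaxOn (fun γ' => ∑ i ∈ Finset.range (j + 1), R i γ' / Real.sqrt s ^ i)
          (Icc γl γr) γ → γ = γj s) :
    ∃ (K : ℝ) (sj : ℕ), 0 ≤ K ∧ 1 ≤ sj ∧ ∀ s : ℕ, sj ≤ s →
      |γj s - γstar s| ≤ K / Real.sqrt s ^ (j + 1) := by
  obtain ⟨c, hc, hR0c⟩ := isCompact_Icc.exists_pos_forall_le_neg hR0cont hR0neg
  obtain ⟨B, hB⟩ : ∃ B, ∀ i ∈ Set.Iic j, ∀ γ ∈ Icc γl γr, |deriv (deriv (R i)) γ| ≤ B := by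
    refine ((Set.finite_Iic j).eventually_all.2 fun i hi => ?_).exists (f := atTop)
    obtain ⟨B, hB⟩ := hRbdd i hi
    filter_upwards [eventually_ge_atTop B] with B' hB' γ hγ using (hB γ hγ).2.2.trans hB'
  obtain ⟨B', hB'⟩ := hRj1bdd
  obtain ⟨N, hN⟩ := eventually_atTop.1 <| (eventually_ge_atTop (max s1 1)).and
    ((Real.tendsto_sqrt_atTop.comp tendsto_natCast_atTop_atTop).eventually_ge_atTop
      (2 * j * B / c))
  refine ⟨2 * (|C| + |B'|) / c, max N 1, by positivity, le_max_right _ _, fun s hs => ?_⟩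
  obtain ⟨hs, hsB⟩ := hN s (le_of_max_le_left hs)
  have hs1 : 1 ≤ s := le_of_max_le_right hs
  have hx : 1 ≤ √(s : ℝ) := Real.one_le_sqrt.2 (by exact_mod_cast hs1)
  obtain ⟨ha, hamax, -⟩ := hγj s (le_of_max_le_left hs)
  obtain ⟨hb, hbmax, -⟩ := hγstar s hs1
  have hcrit : deriv (Rs s) (γstar s) = 0 :=
    (hbmax.isLocalMax (Icc_mem_nhds hb.1 hb.2)).deriv_eq_zero
  have hgrad := abs_sum_range_div_pow_le_of_abs_mul_sum_le (hq s hs1) hx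
    (by simpa only [hcrit, zero_sub, abs_neg] using (happrox s hs1 _ (Ioo_subset_Icc_self hb)).2)
    (hB' _ (Ioo_subset_Icc_self hb)).2
  have hgap := hamax.mul_abs_sub_le_abs_deriv (c := c / 2) (convex_Icc _ _) ha
    (Ioo_subset_Icc_self hb)
    (fun γ hγ => hasDerivAt_sum_range_div_pow fun i hi => (hRdiff i (by omega) γ hγ).1)
    (fun γ hγ => hasDerivAt_sum_range_div_pow fun i hi => (hRdiff i (by omega) γ hγ).2)
    (fun γ hγ => sum_range_succ_div_pow_le_neg_half hc hx hsB (hR0c γ hγ)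
      fun i _ hi => hB i hi γ hγ)
  rw [div_div, le_div_iff₀ (by positivity)]
  have := hgap.trans hgrad
  rw [le_div_iff₀ (by positivity)] at this
  linarith

/-- Optimality gap in the decision variable (Theorem 1, second claim). -/
theorem stmt_1 (j : ℕ) (γl γr : ℝ) (hlr : γl < γr)
    (Rs : ℕ → ℝ → ℝ) (ns qs : ℕ → ℝ) (hq : ∀ s : ℕ, 1 ≤ s → 0 < qs s)
    (R : ℕ → ℝ → ℝ)
    (hRdiff : ∀ i ≤ j, ∀ γ ∈ Icc γl γr,
      DifferentiableAt ℝ (R i) γ ∧ DifferentiableAt ℝ (deriv (R i)) γ)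
    (hRbdd : ∀ i ≤ j, ∃ B : ℝ, ∀ γ ∈ Icc γl γr,
      |R i γ| ≤ B ∧ |deriv (R i) γ| ≤ B ∧ |deriv (deriv (R i)) γ| ≤ B)
    (hRj1diff : ∀ γ ∈ Icc γl γr, DifferentiableAt ℝ (R (j + 1)) γ)
    (hRj1bdd : ∃ B : ℝ, ∀ γ ∈ Icc γl γr,
      |R (j + 1) γ| ≤ B ∧ |deriv (R (j + 1)) γ| ≤ B)
    (hRsdiff : ∀ s : ℕ, 1 ≤ s → ∀ γ ∈ Icc γl γr, DifferentiableAt ℝ (Rs s) γ)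
    (C : ℝ)
    (happrox : ∀ s : ℕ, 1 ≤ s → ∀ γ ∈ Icc γl γr,
      |Rs s γ - ns s - qs s * ∑ i ∈ Finset.range (j + 2), R i γ / Real.sqrt s ^ i|
        ≤ C * qs s / Real.sqrt s ^ (j + 2) ∧
      |deriv (Rs s) γ - qs s * ∑ i ∈ Finset.range (j + 2), deriv (R i) γ / Real.sqrt s ^ i|
        ≤ C * qs s / Real.sqrt s ^ (j + 2))
    (hR0cont : ContinuousOn (deriv (deriv (R 0))) (Icc γl γr))
    (hR0neg : ∀ γ ∈ Icc γl γr, deriv (deriv (R 0)) γ < 0)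
    (γ0 : ℝ) (hγ0 : γ0 ∈ Ioo γl γr)
    (hγ0max : IsMaxOn (R 0) (Icc γl γr) γ0)
    (hγ0uniq : ∀ γ ∈ Icc γl γr, IsMaxOn (R 0) (Icc γl γr) γ → γ = γ0)
    (γstar : ℕ → ℝ)
    (hγstar : ∀ s : ℕ, 1 ≤ s → γstar s ∈ Ioo γl γr ∧
      IsMaxOn (Rs s) (Icc γl γr) (γstar s) ∧
      ∀ γ ∈ Icc γl γr, IsMaxOn (Rs s) (Icc γl γr) γ → γ = γstar s)
    (γj : ℕ → ℝ) (s1 : ℕ)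
    (hγj : ∀ s : ℕ, s1 ≤ s → γj s ∈ Icc γl γr ∧
      IsMaxOn (fun γ => ∑ i ∈ Finset.range (j + 1), R i γ / Real.sqrt s ^ i)
        (Icc γl γr) (γj s) ∧
      ∀ γ ∈ Icc γl γr,
        IsMaxOn (fun γ' => ∑ i ∈ Finset.range (j + 1), R i γ' / Real.sqrt s ^ i)
          (Icc γl γr) γ → γ = γj s) :
    ∃ (K : ℝ) (sj : ℕ), 0 ≤ K ∧ 1 ≤ sj ∧ ∀ s : ℕ, sj ≤ s →
      |γj s - γstar s| ≤ K / Real.sqrt s ^ (j + 1) :=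
  stmt_1_general j γl γr Rs ns qs hq R hRdiff hRbdd hRj1bdd C happrox hR0cont hR0neg γstar hγstar γj
    s1 hγj
end

section
/- There exist a constant M_j′ > 0 independent of s and an integer s_j′ ≥ 1 such that for all integers s ≥ s_j′, |Σ_{i=0}^{j} R_i′(γ*_s)/s^{i/2}| ≤ M_j′ / s^{(j+1)/2}. -/
open Set Finset

/- At the interior maximizer `γ*_s` the derivative of `R_s` vanishes, so the derivative
expansion of order `j + 1` is itself `O(s^{-(j+2)/2})` there; dropping its last term, which
is bounded, costs only `O(s^{-(j+1)/2})`. -/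

lemma abs_sum_range_div_pow_le_of_succ {a : ℕ → ℝ} {t c B : ℝ} (n : ℕ) (ht : 1 ≤ t)
    (hsum : |∑ i ∈ range (n + 2), a i / t ^ i| ≤ c / t ^ (n + 2)) (hB : |a (n + 1)| ≤ B) :
    |∑ i ∈ range (n + 1), a i / t ^ i| ≤ (|c| + B) / t ^ (n + 1) := by
  have htpos : 0 < t ^ (n + 1) := pow_pos (zero_lt_one.trans_le ht) _
  rw [sum_range_succ] at hsum
  set T := ∑ i ∈ range (n + 1), a i / t ^ i
  have hc : c / t ^ (n + 2) ≤ |c| / t ^ (n + 1) :=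
    (div_le_div_of_nonneg_right (le_abs_self c) (by positivity)).trans
      (div_le_div_of_nonneg_left (abs_nonneg c) htpos (pow_le_pow_right₀ ht (by omega)))
  have hlast : |a (n + 1) / t ^ (n + 1)| ≤ B / t ^ (n + 1) := by
    rw [abs_div, abs_of_pos htpos]
    gcongr
  calc |T| = |(T + a (n + 1) / t ^ (n + 1)) - a (n + 1) / t ^ (n + 1)| := by ring_nf
    _ ≤ |T + a (n + 1) / t ^ (n + 1)| + |a (n + 1) / t ^ (n + 1)| := abs_sub _ _
    _ ≤ |c| / t ^ (n + 1) + B / t ^ (n + 1) := add_le_add (hsum.trans hc) hlast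
    _ = (|c| + B) / t ^ (n + 1) := by rw [add_div]

theorem stmt_3_general (j : ℕ) (γl γr : ℝ)
    (Rs : ℕ → ℝ → ℝ) (ns qs : ℕ → ℝ) (hq : ∀ s : ℕ, 1 ≤ s → 0 < qs s)
    (R : ℕ → ℝ → ℝ)
    (hRj1bdd : ∃ B : ℝ, ∀ γ ∈ Icc γl γr,
      |R (j + 1) γ| ≤ B ∧ |deriv (R (j + 1)) γ| ≤ B)
    (C : ℝ)
    (happrox : ∀ s : ℕ, 1 ≤ s → ∀ γ ∈ Icc γl γr,
      |Rs s γ - ns s - qs s * ∑ i ∈ Finset.range (j + 2), R i γ / Real.sqrt s ^ i|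
        ≤ C * qs s / Real.sqrt s ^ (j + 2) ∧
      |deriv (Rs s) γ - qs s * ∑ i ∈ Finset.range (j + 2), deriv (R i) γ / Real.sqrt s ^ i|
        ≤ C * qs s / Real.sqrt s ^ (j + 2))
    (γstar : ℕ → ℝ)
    (hγstar : ∀ s : ℕ, 1 ≤ s → γstar s ∈ Ioo γl γr ∧
      IsMaxOn (Rs s) (Icc γl γr) (γstar s) ∧
      ∀ γ ∈ Icc γl γr, IsMaxOn (Rs s) (Icc γl γr) γ → γ = γstar s)
    :
    ∃ (M' : ℝ) (sj' : ℕ), 0 < M' ∧ 1 ≤ sj' ∧ ∀ s : ℕ, sj' ≤ s →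
      |∑ i ∈ Finset.range (j + 1), deriv (R i) (γstar s) / Real.sqrt s ^ i|
        ≤ M' / Real.sqrt s ^ (j + 1) := by
  obtain ⟨B, hB⟩ := hRj1bdd
  refine ⟨|C| + |B| + 1, 1, by positivity, le_rfl, fun s hs => ?_⟩
  have hsqrt : 1 ≤ Real.sqrt s := Real.one_le_sqrt.mpr (by exact_mod_cast hs)
  obtain ⟨hmem, hmax, -⟩ := hγstar s hs
  have hcrit : deriv (Rs s) (γstar s) = 0 :=
    (hmax.isLocalMax (Icc_mem_nhds hmem.1 hmem.2)).deriv_eq_zero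
  have hsum : |∑ i ∈ range (j + 2), deriv (R i) (γstar s) / Real.sqrt s ^ i|
      ≤ C / Real.sqrt s ^ (j + 2) := by
    have h := (happrox s hs _ (Ioo_subset_Icc_self hmem)).2
    rw [hcrit, zero_sub, abs_neg, abs_mul, abs_of_pos (hq s hs), mul_comm C,
      mul_div_assoc] at h
    exact le_of_mul_le_mul_left h (hq s hs)
  calc _ ≤ (|C| + |B|) / Real.sqrt s ^ (j + 1) :=
        abs_sum_range_div_pow_le_of_succ j hsqrt hsum
          ((hB _ (Ioo_subset_Icc_self hmem)).2.trans (le_abs_self B))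
    _ ≤ _ := div_le_div_of_nonneg_right (by linarith) (by positivity)

/-- Corollary 1: bound on the derivative of the expansion at the exact optimizer. -/
theorem stmt_3 (j : ℕ) (γl γr : ℝ) (hlr : γl < γr)
    (Rs : ℕ → ℝ → ℝ) (ns qs : ℕ → ℝ) (hq : ∀ s : ℕ, 1 ≤ s → 0 < qs s)
    (R : ℕ → ℝ → ℝ)
    (hRdiff : ∀ i ≤ j, ∀ γ ∈ Icc γl γr,
      DifferentiableAt ℝ (R i) γ ∧ DifferentiableAt ℝ (deriv (R i)) γ)
    (hRbdd : ∀ i ≤ j, ∃ B : ℝ, ∀ γ ∈ Icc γl γr,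
      |R i γ| ≤ B ∧ |deriv (R i) γ| ≤ B ∧ |deriv (deriv (R i)) γ| ≤ B)
    (hRj1diff : ∀ γ ∈ Icc γl γr, DifferentiableAt ℝ (R (j + 1)) γ)
    (hRj1bdd : ∃ B : ℝ, ∀ γ ∈ Icc γl γr,
      |R (j + 1) γ| ≤ B ∧ |deriv (R (j + 1)) γ| ≤ B)
    (hRsdiff : ∀ s : ℕ, 1 ≤ s → ∀ γ ∈ Icc γl γr, DifferentiableAt ℝ (Rs s) γ)
    (C : ℝ)
    (happrox : ∀ s : ℕ, 1 ≤ s → ∀ γ ∈ Icc γl γr,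
      |Rs s γ - ns s - qs s * ∑ i ∈ Finset.range (j + 2), R i γ / Real.sqrt s ^ i|
        ≤ C * qs s / Real.sqrt s ^ (j + 2) ∧
      |deriv (Rs s) γ - qs s * ∑ i ∈ Finset.range (j + 2), deriv (R i) γ / Real.sqrt s ^ i|
        ≤ C * qs s / Real.sqrt s ^ (j + 2))
    (hR0cont : ContinuousOn (deriv (deriv (R 0))) (Icc γl γr))
    (hR0neg : ∀ γ ∈ Icc γl γr, deriv (deriv (R 0)) γ < 0)
    (γ0 : ℝ) (hγ0 : γ0 ∈ Ioo γl γr)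
    (hγ0max : IsMaxOn (R 0) (Icc γl γr) γ0)
    (hγ0uniq : ∀ γ ∈ Icc γl γr, IsMaxOn (R 0) (Icc γl γr) γ → γ = γ0)
    (γstar : ℕ → ℝ)
    (hγstar : ∀ s : ℕ, 1 ≤ s → γstar s ∈ Ioo γl γr ∧
      IsMaxOn (Rs s) (Icc γl γr) (γstar s) ∧
      ∀ γ ∈ Icc γl γr, IsMaxOn (Rs s) (Icc γl γr) γ → γ = γstar s)
    :
    ∃ (M' : ℝ) (sj' : ℕ), 0 < M' ∧ 1 ≤ sj' ∧ ∀ s : ℕ, sj' ≤ s →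
      |∑ i ∈ Finset.range (j + 1), deriv (R i) (γstar s) / Real.sqrt s ^ i|
        ≤ M' / Real.sqrt s ^ (j + 1) :=
  stmt_3_general j γl γr Rs ns qs hq R hRj1bdd C happrox γstar hγstar
end

section
/- For all integers s ≥ 1 for which γ_{j,s} is defined, 0 ≤ R_s(γ*_s) − R_s(γ_{j,s}), and there exist a constant C′ and an integer s′ ≥ 1 such that for all s ≥ s′, R_s(γ*_s) − R_s(γ_{j,s}) ≤ q_s ( (R_{j+1}(γ*_s) − R_{j+1}(γ_{j,s})) / s^{(j+1)/2} + C′ / s^{(j+2)/2} ). -/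
/-!
Since `γ*_s` maximizes `R_s`, the difference is nonnegative. For the upper bound, expand `R_s`
at both points up to order `j + 1`: the terms of order `≤ j` contribute nonpositively because
`γ_{j,s}` maximizes their sum, which leaves the order-`(j + 1)` term and twice the remainder.
-/

open Set Finset

theorem sub_le_of_abs_sub_mul_add_le {α : Type*} {f g h : α → ℝ} {n q ε : ℝ} {x y : α}
    (hq : 0 ≤ q) (hx : |f x - n - q * (g x + h x)| ≤ ε)
    (hy : |f y - n - q * (g y + h y)| ≤ ε)
    (hg : g x ≤ g y) :
    f x - f y ≤ q * (h x - h y) + 2 * ε := by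
  have hqg : q * g x ≤ q * g y := mul_le_mul_of_nonneg_left hg hq
  linarith [(abs_le.mp hx).2, (abs_le.mp hy).1]

theorem stmt_4_general (j : ℕ) (γl γr : ℝ)
    (Rs : ℕ → ℝ → ℝ) (ns qs : ℕ → ℝ) (hq : ∀ s : ℕ, 1 ≤ s → 0 < qs s)
    (R : ℕ → ℝ → ℝ)
    (C : ℝ)
    (happrox : ∀ s : ℕ, 1 ≤ s → ∀ γ ∈ Icc γl γr,
      |Rs s γ - ns s - qs s * ∑ i ∈ Finset.range (j + 2), R i γ / Real.sqrt s ^ i|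
        ≤ C * qs s / Real.sqrt s ^ (j + 2))
    (γstar : ℕ → ℝ)
    (hγstar : ∀ s : ℕ, 1 ≤ s → γstar s ∈ Ioo γl γr ∧
      IsMaxOn (Rs s) (Icc γl γr) (γstar s) ∧
      ∀ γ ∈ Icc γl γr, IsMaxOn (Rs s) (Icc γl γr) γ → γ = γstar s)
    (γj : ℕ → ℝ) (s1 : ℕ)
    (hγj : ∀ s : ℕ, s1 ≤ s → γj s ∈ Icc γl γr ∧
      IsMaxOn (fun γ => ∑ i ∈ Finset.range (j + 1), R i γ / Real.sqrt s ^ i)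
        (Icc γl γr) (γj s) ∧
      ∀ γ ∈ Icc γl γr,
        IsMaxOn (fun γ' => ∑ i ∈ Finset.range (j + 1), R i γ' / Real.sqrt s ^ i)
          (Icc γl γr) γ → γ = γj s) :
    (∀ s : ℕ, 1 ≤ s → s1 ≤ s → 0 ≤ Rs s (γstar s) - Rs s (γj s)) ∧
    ∃ (C' : ℝ) (s' : ℕ), 1 ≤ s' ∧ ∀ s : ℕ, s' ≤ s →
      Rs s (γstar s) - Rs s (γj s)
        ≤ qs s * ((R (j + 1) (γstar s) - R (j + 1) (γj s)) / Real.sqrt s ^ (j + 1)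
            + C' / Real.sqrt s ^ (j + 2)) := by
  refine ⟨fun s hs hss1 => sub_nonneg.mpr ((hγstar s hs).2.1 (hγj s hss1).1),
    2 * C, max 1 s1, le_max_left _ _, fun s hs => ?_⟩
  obtain ⟨hs, hss1⟩ := max_le_iff.mp hs
  have hstar : γstar s ∈ Icc γl γr := Ioo_subset_Icc_self (hγstar s hs).1
  obtain ⟨hjmem, hjmax, -⟩ := hγj s hss1
  set σ := Real.sqrt s
  have happrox' : ∀ γ ∈ Icc γl γr, |Rs s γ - ns s -
      qs s * (∑ i ∈ Finset.range (j + 1), R i γ / σ ^ i + R (j + 1) γ / σ ^ (j + 1))|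
        ≤ C * qs s / σ ^ (j + 2) := fun γ hγ => by
    simpa only [Finset.sum_range_succ _ (j + 1)] using happrox s hs γ hγ
  calc Rs s (γstar s) - Rs s (γj s)
      ≤ qs s * (R (j + 1) (γstar s) / σ ^ (j + 1) - R (j + 1) (γj s) / σ ^ (j + 1))
          + 2 * (C * qs s / σ ^ (j + 2)) :=
        sub_le_of_abs_sub_mul_add_le
          (g := fun γ => ∑ i ∈ Finset.range (j + 1), R i γ / σ ^ i)
          (h := fun γ => R (j + 1) γ / σ ^ (j + 1))
          (hq s hs).le (happrox' _ hstar) (happrox' _ hjmem) (hjmax hstar)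
    _ = _ := by ring

/-- Suboptimality sandwich used in the proof of Theorem 1. -/
theorem stmt_4 (j : ℕ) (γl γr : ℝ) (hlr : γl < γr)
    (Rs : ℕ → ℝ → ℝ) (ns qs : ℕ → ℝ) (hq : ∀ s : ℕ, 1 ≤ s → 0 < qs s)
    (R : ℕ → ℝ → ℝ)
    (hRdiff : ∀ i ≤ j, ∀ γ ∈ Icc γl γr,
      DifferentiableAt ℝ (R i) γ ∧ DifferentiableAt ℝ (deriv (R i)) γ)
    (hRbdd : ∀ i ≤ j, ∃ B : ℝ, ∀ γ ∈ Icc γl γr,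
      |R i γ| ≤ B ∧ |deriv (R i) γ| ≤ B ∧ |deriv (deriv (R i)) γ| ≤ B)
    (hRj1diff : ∀ γ ∈ Icc γl γr, DifferentiableAt ℝ (R (j + 1)) γ)
    (hRj1bdd : ∃ B : ℝ, ∀ γ ∈ Icc γl γr,
      |R (j + 1) γ| ≤ B ∧ |deriv (R (j + 1)) γ| ≤ B)
    (hRsdiff : ∀ s : ℕ, 1 ≤ s → ∀ γ ∈ Icc γl γr, DifferentiableAt ℝ (Rs s) γ)
    (C : ℝ)
    (happrox : ∀ s : ℕ, 1 ≤ s → ∀ γ ∈ Icc γl γr,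
      |Rs s γ - ns s - qs s * ∑ i ∈ Finset.range (j + 2), R i γ / Real.sqrt s ^ i|
        ≤ C * qs s / Real.sqrt s ^ (j + 2))
    (hR0cont : ContinuousOn (deriv (deriv (R 0))) (Icc γl γr))
    (hR0neg : ∀ γ ∈ Icc γl γr, deriv (deriv (R 0)) γ < 0)
    (γ0 : ℝ) (hγ0 : γ0 ∈ Ioo γl γr)
    (hγ0max : IsMaxOn (R 0) (Icc γl γr) γ0)
    (hγ0uniq : ∀ γ ∈ Icc γl γr, IsMaxOn (R 0) (Icc γl γr) γ → γ = γ0)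
    (γstar : ℕ → ℝ)
    (hγstar : ∀ s : ℕ, 1 ≤ s → γstar s ∈ Ioo γl γr ∧
      IsMaxOn (Rs s) (Icc γl γr) (γstar s) ∧
      ∀ γ ∈ Icc γl γr, IsMaxOn (Rs s) (Icc γl γr) γ → γ = γstar s)
    (γj : ℕ → ℝ) (s1 : ℕ)
    (hγj : ∀ s : ℕ, s1 ≤ s → γj s ∈ Icc γl γr ∧
      IsMaxOn (fun γ => ∑ i ∈ Finset.range (j + 1), R i γ / Real.sqrt s ^ i)
        (Icc γl γr) (γj s) ∧
      ∀ γ ∈ Icc γl γr,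
        IsMaxOn (fun γ' => ∑ i ∈ Finset.range (j + 1), R i γ' / Real.sqrt s ^ i)
          (Icc γl γr) γ → γ = γj s) :
    (∀ s : ℕ, 1 ≤ s → s1 ≤ s → 0 ≤ Rs s (γstar s) - Rs s (γj s)) ∧
    ∃ (C' : ℝ) (s' : ℕ), 1 ≤ s' ∧ ∀ s : ℕ, s' ≤ s →
      Rs s (γstar s) - Rs s (γj s)
        ≤ qs s * ((R (j + 1) (γstar s) - R (j + 1) (γj s)) / Real.sqrt s ^ (j + 1)
            + C' / Real.sqrt s ^ (j + 2)) :=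
  stmt_4_general j γl γr Rs ns qs hq R C happrox γstar hγstar γj s1 hγj
end

section
/- There exist a constant M_j ≥ 0 independent of s and an integer s_j ≥ 1 such that for all integers s ≥ s_j, |D_s(γ_{j,s}) − ε| ≤ M_j / s^{(j+1)/2}. -/
/-!
At `γ_{j,s}` the expansion truncated after order `j` equals `ε` exactly, so `D_s(γ_{j,s}) − ε` is
the next term `D_{j+1}(γ_{j,s}) / s^{(j+1)/2}` plus the remainder of the order-`(j+1)` expansion,
and both are `O(s^{-(j+1)/2})`.
-/

open Set

lemma div_pow_le_abs_div_pow {r : ℝ} (hr : 1 ≤ r) (C : ℝ) {m n : ℕ} (hmn : m ≤ n) :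
    C / r ^ n ≤ |C| / r ^ m :=
  div_le_div₀ (abs_nonneg C) (le_abs_self C) (pow_pos (one_pos.trans_le hr) _)
    (pow_le_pow_right₀ hr hmn)

lemma abs_sub_le_of_abs_sub_add_div_pow_le {x y d r B C : ℝ} {n : ℕ} (hr : 1 ≤ r)
    (hx : |x - (y + d / r ^ (n + 1))| ≤ C / r ^ (n + 2)) (hd : |d| ≤ B) :
    |x - y| ≤ (|C| + B) / r ^ (n + 1) := by
  have hrpow : 0 < r ^ (n + 1) := pow_pos (one_pos.trans_le hr) _
  have hterm : |d / r ^ (n + 1)| ≤ B / r ^ (n + 1) := by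
    rw [abs_div, abs_of_pos hrpow]
    gcongr
  calc |x - y| = |(x - (y + d / r ^ (n + 1))) + d / r ^ (n + 1)| := by ring_nf
    _ ≤ C / r ^ (n + 2) + B / r ^ (n + 1) := (abs_add_le _ _).trans (add_le_add hx hterm)
    _ ≤ |C| / r ^ (n + 1) + B / r ^ (n + 1) :=
        add_le_add (div_pow_le_abs_div_pow hr C (Nat.le_succ _)) le_rfl
    _ = (|C| + B) / r ^ (n + 1) := (add_div _ _ _).symm

theorem stmt_5_general (j : ℕ) (ε : ℝ)
    (γl γr : ℝ)
    (Ds : ℕ → ℝ → ℝ) (D : ℕ → ℝ → ℝ)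
    (hDj1bdd : ∃ B : ℝ, ∀ γ ∈ Icc γl γr, |D (j + 1) γ| ≤ B)
    (C : ℝ)
    (happrox : ∀ s : ℕ, 1 ≤ s → ∀ γ ∈ Icc γl γr,
      |Ds s γ - ∑ i ∈ Finset.range (j + 2), D i γ / Real.sqrt s ^ i|
        ≤ C / Real.sqrt s ^ (j + 2))
    (γj : ℕ → ℝ) (s1 : ℕ)
    (hγj : ∀ s : ℕ, s1 ≤ s → γj s ∈ Icc γl γr ∧
      ∑ i ∈ Finset.range (j + 1), D i (γj s) / Real.sqrt s ^ i = ε ∧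
      ∀ γ ∈ Icc γl γr,
        ∑ i ∈ Finset.range (j + 1), D i γ / Real.sqrt s ^ i = ε → γ = γj s) :
    ∃ (M : ℝ) (sj : ℕ), 0 ≤ M ∧ 1 ≤ sj ∧ ∀ s : ℕ, sj ≤ s →
      |Ds s (γj s) - ε| ≤ M / Real.sqrt s ^ (j + 1) := by
  obtain ⟨B, hB⟩ := hDj1bdd
  refine ⟨|C| + |B|, max s1 1, by positivity, le_max_right _ _, fun s hs => ?_⟩
  obtain ⟨hmem, hsum, -⟩ := hγj s (le_of_max_le_left hs)
  have hs1 : 1 ≤ s := le_of_max_le_right hs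
  have hsqrt : 1 ≤ Real.sqrt s := Real.one_le_sqrt.mpr (by exact_mod_cast hs1)
  have hrem := happrox s hs1 (γj s) hmem
  rw [Finset.sum_range_succ, hsum] at hrem
  exact abs_sub_le_of_abs_sub_add_div_pow_le hsqrt hrem ((hB _ hmem).trans (le_abs_self B))

/-- Corollary 2, first claim: constraint gap for dimensioning under a delay constraint. -/
theorem stmt_5 (j : ℕ) (ε : ℝ) (hε : ε ∈ Ioo (0 : ℝ) 1)
    (γl γr : ℝ) (hlr : γl < γr)
    (Ds : ℕ → ℝ → ℝ) (D : ℕ → ℝ → ℝ)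
    (hDdiff : ∀ i ≤ j, ∀ γ ∈ Icc γl γr,
      DifferentiableAt ℝ (D i) γ ∧ DifferentiableAt ℝ (deriv (D i)) γ)
    (hDbdd : ∀ i ≤ j, ∃ B : ℝ, ∀ γ ∈ Icc γl γr,
      |D i γ| ≤ B ∧ |deriv (D i) γ| ≤ B ∧ |deriv (deriv (D i)) γ| ≤ B)
    (hDj1bdd : ∃ B : ℝ, ∀ γ ∈ Icc γl γr, |D (j + 1) γ| ≤ B)
    (C : ℝ)
    (happrox : ∀ s : ℕ, 1 ≤ s → ∀ γ ∈ Icc γl γr,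
      |Ds s γ - ∑ i ∈ Finset.range (j + 2), D i γ / Real.sqrt s ^ i|
        ≤ C / Real.sqrt s ^ (j + 2))
    (hD0cont : ContinuousOn (deriv (D 0)) (Icc γl γr))
    (hD0neg : ∀ γ ∈ Icc γl γr, deriv (D 0) γ < 0)
    (γ0 : ℝ) (hγ0 : γ0 ∈ Ioo γl γr) (hγ0sol : D 0 γ0 = ε)
    (γstar : ℕ → ℝ)
    (hγstar : ∀ s : ℕ, 1 ≤ s → γstar s ∈ Ioo γl γr ∧ Ds s (γstar s) = ε ∧
      ∀ γ ∈ Icc γl γr, Ds s γ = ε → γ = γstar s)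
    (γj : ℕ → ℝ) (s1 : ℕ)
    (hγj : ∀ s : ℕ, s1 ≤ s → γj s ∈ Icc γl γr ∧
      ∑ i ∈ Finset.range (j + 1), D i (γj s) / Real.sqrt s ^ i = ε ∧
      ∀ γ ∈ Icc γl γr,
        ∑ i ∈ Finset.range (j + 1), D i γ / Real.sqrt s ^ i = ε → γ = γj s) :
    ∃ (M : ℝ) (sj : ℕ), 0 ≤ M ∧ 1 ≤ sj ∧ ∀ s : ℕ, sj ≤ s →
      |Ds s (γj s) - ε| ≤ M / Real.sqrt s ^ (j + 1) :=
  stmt_5_general j ε γl γr Ds D hDj1bdd C happrox γj s1 hγj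
end

section
/- There exist a constant K_j ≥ 0 independent of s and an integer s_j ≥ 1 such that for all integers s ≥ s_j, |γ_{j,s} − γ*_s| ≤ K_j / s^{(j+1)/2}. -/
open Set Finset

/-!
Write `F_s γ = ∑_{i ≤ j} D_i γ / √s ^ i` for the truncated expansion. Since `D_0'` is continuous
and negative on the compact interval it is at most `-m < 0` there, while the higher terms of
`F_s'` are `O(1/√s)`; so for large `s` we have `F_s' ≤ -m/2` and, by the mean value theorem,
`m/2 · |γ_{j,s} - γ*_s| ≤ |F_s γ_{j,s} - F_s γ*_s| = |D_s γ*_s - F_s γ*_s|`. The right-hand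
side is the tail of the expansion beyond order `j`, which is `O(1/√s ^ (j+1))`.
-/

lemma exists_pos_forall_le_neg_of_forall_neg {s : Set ℝ} {g : ℝ → ℝ} (hs : IsCompact s)
    (hg : ContinuousOn g s) (hneg : ∀ x ∈ s, g x < 0) : ∃ m > 0, ∀ x ∈ s, g x ≤ -m := by
  rcases s.eq_empty_or_nonempty with rfl | hne
  · exact ⟨1, one_pos, by simp⟩
  obtain ⟨x₀, hx₀, hmax⟩ := hs.exists_isMaxOn hne hg
  exact ⟨-g x₀, neg_pos.2 (hneg x₀ hx₀), fun x hx => by simpa using hmax hx⟩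

lemma exists_forall_abs_le_of_forall_le {α : Type*} {f : ℕ → α → ℝ} {s : Set α} {n : ℕ}
    (h : ∀ i ≤ n, ∃ B, ∀ x ∈ s, |f i x| ≤ B) : ∃ B, ∀ i ≤ n, ∀ x ∈ s, |f i x| ≤ B := by
  have : ∀ᶠ B in Filter.atTop, ∀ i ∈ Set.Iic n, ∀ x ∈ s, |f i x| ≤ B :=
    (Set.finite_Iic n).eventually_all.2 fun i hi =>
      let ⟨B, hB⟩ := h i hi
      Filter.eventually_atTop.2 ⟨B, fun _ hB' x hx => (hB x hx).trans hB'⟩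
  exact this.exists

lemma mul_abs_sub_le_abs_image_sub_of_deriv_le_neg {f : ℝ → ℝ} {D : Set ℝ} (hD : Convex ℝ D)
    (hf : ∀ x ∈ D, DifferentiableAt ℝ f x) {c : ℝ} (hf' : ∀ x ∈ D, deriv f x ≤ -c)
    {x y : ℝ} (hx : x ∈ D) (hy : y ∈ D) : c * |y - x| ≤ |f y - f x| := by
  wlog hxy : x ≤ y generalizing x y
  · rw [abs_sub_comm, abs_sub_comm (f y)]
    exact this hy hx (le_of_not_ge hxy)
  have hmvt := hD.image_sub_le_mul_sub_of_deriv_le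
    (fun z hz => (hf z hz).continuousAt.continuousWithinAt)
    (fun z hz => (hf z (interior_subset hz)).differentiableWithinAt)
    (fun z hz => hf' z (interior_subset hz)) x hx y hy hxy
  rw [abs_of_nonneg (sub_nonneg.2 hxy)]
  linarith [neg_abs_le (f y - f x)]

section TruncatedExpansion

variable {D : ℕ → ℝ → ℝ} {n : ℕ} {t γ : ℝ}

lemma differentiableAt_sum_div_pow (hD : ∀ i ≤ n, DifferentiableAt ℝ (D i) γ) :
    DifferentiableAt ℝ (fun γ => ∑ i ∈ range (n + 1), D i γ / t ^ i) γ :=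
  DifferentiableAt.fun_sum fun i hi =>
    (hD i (Nat.lt_succ_iff.1 (mem_range.1 hi))).div_const _

lemma deriv_sum_div_pow_le {m B : ℝ} (ht : 1 ≤ t) (hD : ∀ i ≤ n, DifferentiableAt ℝ (D i) γ)
    (h₀ : deriv (D 0) γ ≤ -m) (hB : ∀ i ≤ n, |deriv (D i) γ| ≤ B) :
    deriv (fun γ => ∑ i ∈ range (n + 1), D i γ / t ^ i) γ ≤ -m + n * B / t := by
  rw [deriv_fun_sum fun i hi => (hD i (Nat.lt_succ_iff.1 (mem_range.1 hi))).div_const _]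
  simp only [deriv_div_const]
  rw [sum_range_succ', pow_zero, div_one]
  have hterm : ∀ i ∈ range n, deriv (D (i + 1)) γ / t ^ (i + 1) ≤ B / t := by
    intro i hi
    have hi : i + 1 ≤ n := mem_range.1 hi
    have hB₀ : 0 ≤ B := (abs_nonneg _).trans (hB _ hi)
    calc deriv (D (i + 1)) γ / t ^ (i + 1) ≤ B / t ^ (i + 1) := by
          gcongr; exact (le_abs_self _).trans (hB _ hi)
      _ ≤ B / t ^ 1 :=
          div_le_div_of_nonneg_left hB₀ (by positivity) (pow_le_pow_right₀ ht (by omega))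
      _ = B / t := by rw [pow_one]
  have hsum := sum_le_sum hterm
  rw [sum_const, card_range, nsmul_eq_mul] at hsum
  rw [mul_div_assoc]
  linarith

lemma abs_sub_sum_range_div_pow_le {a C B : ℝ} {f : ℕ → ℝ} (ht : 1 ≤ t)
    (happrox : |a - ∑ i ∈ range (n + 2), f i / t ^ i| ≤ C / t ^ (n + 2))
    (hB : |f (n + 1)| ≤ B) :
    |a - ∑ i ∈ range (n + 1), f i / t ^ i| ≤ (|C| + B) / t ^ (n + 1) := by
  rw [sum_range_succ] at happrox
  set S := ∑ i ∈ range (n + 1), f i / t ^ i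
  have htail : |f (n + 1) / t ^ (n + 1)| ≤ B / t ^ (n + 1) := by
    have htpos : 0 < t ^ (n + 1) := by positivity
    rw [abs_div, abs_of_pos htpos]
    exact div_le_div_of_nonneg_right hB htpos.le
  have hC : C / t ^ (n + 2) ≤ |C| / t ^ (n + 1) :=
    calc C / t ^ (n + 2) ≤ |C| / t ^ (n + 2) := by gcongr; exact le_abs_self C
      _ ≤ |C| / t ^ (n + 1) :=
          div_le_div_of_nonneg_left (abs_nonneg C) (by positivity) (pow_le_pow_right₀ ht (by omega))
  calc |a - S| = |(a - (S + f (n + 1) / t ^ (n + 1))) + f (n + 1) / t ^ (n + 1)| := by ring_nf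
    _ ≤ |a - (S + f (n + 1) / t ^ (n + 1))| + |f (n + 1) / t ^ (n + 1)| := abs_add_le _ _
    _ ≤ (|C| + B) / t ^ (n + 1) := by rw [add_div]; linarith

end TruncatedExpansion

lemma eventually_natCast_div_sqrt_le (a : ℝ) {b : ℝ} (hb : 0 < b) :
    ∀ᶠ s : ℕ in Filter.atTop, a / Real.sqrt s ≤ b := by
  have h : Filter.Tendsto (fun s : ℕ => a * (Real.sqrt s)⁻¹) Filter.atTop (nhds 0) := by
    simpa using (tendsto_inv_atTop_zero.comp
      (Real.tendsto_sqrt_atTop.comp tendsto_natCast_atTop_atTop)).const_mul a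
  simpa only [div_eq_mul_inv] using h.eventually (ge_mem_nhds hb)
theorem stmt_6_general (j : ℕ) (ε : ℝ)
    (γl γr : ℝ)
    (Ds : ℕ → ℝ → ℝ) (D : ℕ → ℝ → ℝ)
    (hDdiff : ∀ i ≤ j, ∀ γ ∈ Icc γl γr,
      DifferentiableAt ℝ (D i) γ ∧ DifferentiableAt ℝ (deriv (D i)) γ)
    (hDbdd : ∀ i ≤ j, ∃ B : ℝ, ∀ γ ∈ Icc γl γr,
      |D i γ| ≤ B ∧ |deriv (D i) γ| ≤ B ∧ |deriv (deriv (D i)) γ| ≤ B)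
    (hDj1bdd : ∃ B : ℝ, ∀ γ ∈ Icc γl γr, |D (j + 1) γ| ≤ B)
    (C : ℝ)
    (happrox : ∀ s : ℕ, 1 ≤ s → ∀ γ ∈ Icc γl γr,
      |Ds s γ - ∑ i ∈ Finset.range (j + 2), D i γ / Real.sqrt s ^ i|
        ≤ C / Real.sqrt s ^ (j + 2))
    (hD0cont : ContinuousOn (deriv (D 0)) (Icc γl γr))
    (hD0neg : ∀ γ ∈ Icc γl γr, deriv (D 0) γ < 0)
    (γstar : ℕ → ℝ)
    (hγstar : ∀ s : ℕ, 1 ≤ s → γstar s ∈ Ioo γl γr ∧ Ds s (γstar s) = ε ∧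
      ∀ γ ∈ Icc γl γr, Ds s γ = ε → γ = γstar s)
    (γj : ℕ → ℝ) (s1 : ℕ)
    (hγj : ∀ s : ℕ, s1 ≤ s → γj s ∈ Icc γl γr ∧
      ∑ i ∈ Finset.range (j + 1), D i (γj s) / Real.sqrt s ^ i = ε ∧
      ∀ γ ∈ Icc γl γr,
        ∑ i ∈ Finset.range (j + 1), D i γ / Real.sqrt s ^ i = ε → γ = γj s) :
    ∃ (K : ℝ) (sj : ℕ), 0 ≤ K ∧ 1 ≤ sj ∧ ∀ s : ℕ, sj ≤ s →
      |γj s - γstar s| ≤ K / Real.sqrt s ^ (j + 1) := by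
  obtain ⟨B, hB⟩ := exists_forall_abs_le_of_forall_le fun i hi =>
    let ⟨B, hB⟩ := hDbdd i hi
    ⟨B, fun γ hγ => (hB γ hγ).2.1⟩
  obtain ⟨B₁, hB₁⟩ := hDj1bdd
  obtain ⟨m, hm, hD0le⟩ := exists_pos_forall_le_neg_of_forall_neg isCompact_Icc hD0cont hD0neg
  obtain ⟨N, hN⟩ := Filter.eventually_atTop.1 <| (Filter.eventually_ge_atTop (max s1 1)).and
    (eventually_natCast_div_sqrt_le (j * B) (half_pos hm))
  refine ⟨2 * (|C| + |B₁|) / m, max N 1, by positivity, le_max_right _ _, fun s hsN => ?_⟩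
  obtain ⟨hs_ge, hsmall⟩ := hN s (le_of_max_le_left hsN)
  obtain ⟨hs1, hs⟩ := max_le_iff.1 hs_ge
  obtain ⟨hγj_mem, hγj_eq, -⟩ := hγj s hs1
  obtain ⟨hγstar_mem, hγstar_eq, -⟩ := hγstar s hs
  have ht : 1 ≤ Real.sqrt s := Real.one_le_sqrt.2 (by exact_mod_cast hs)
  have hderiv : ∀ γ ∈ Icc γl γr,
      deriv (fun γ => ∑ i ∈ range (j + 1), D i γ / Real.sqrt s ^ i) γ ≤ -(m / 2) :=
    fun γ hγ => (deriv_sum_div_pow_le ht (fun i hi => (hDdiff i hi γ hγ).1) (hD0le γ hγ)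
      (fun i hi => hB i hi γ hγ)).trans (by linarith)
  have hgap := mul_abs_sub_le_abs_image_sub_of_deriv_le_neg (convex_Icc γl γr)
    (fun γ hγ => differentiableAt_sum_div_pow fun i hi => (hDdiff i hi γ hγ).1) hderiv
    (Ioo_subset_Icc_self hγstar_mem) hγj_mem
  have htail := abs_sub_sum_range_div_pow_le ht
    (happrox s hs _ (Ioo_subset_Icc_self hγstar_mem))
    ((hB₁ _ (Ioo_subset_Icc_self hγstar_mem)).trans (le_abs_self B₁))
  rw [hγj_eq, ← hγstar_eq] at hgap
  calc |γj s - γstar s| = m / 2 * |γj s - γstar s| / (m / 2) := by field_simp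
    _ ≤ (|C| + |B₁|) / Real.sqrt s ^ (j + 1) / (m / 2) := by gcongr; exact hgap.trans htail
    _ = 2 * (|C| + |B₁|) / m / Real.sqrt s ^ (j + 1) := by field_simp

/-- Corollary 2, second claim: decision-variable gap for dimensioning under a delay constraint. -/
theorem stmt_6 (j : ℕ) (ε : ℝ) (hε : ε ∈ Ioo (0 : ℝ) 1)
    (γl γr : ℝ) (hlr : γl < γr)
    (Ds : ℕ → ℝ → ℝ) (D : ℕ → ℝ → ℝ)
    (hDdiff : ∀ i ≤ j, ∀ γ ∈ Icc γl γr,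
      DifferentiableAt ℝ (D i) γ ∧ DifferentiableAt ℝ (deriv (D i)) γ)
    (hDbdd : ∀ i ≤ j, ∃ B : ℝ, ∀ γ ∈ Icc γl γr,
      |D i γ| ≤ B ∧ |deriv (D i) γ| ≤ B ∧ |deriv (deriv (D i)) γ| ≤ B)
    (hDj1bdd : ∃ B : ℝ, ∀ γ ∈ Icc γl γr, |D (j + 1) γ| ≤ B)
    (C : ℝ)
    (happrox : ∀ s : ℕ, 1 ≤ s → ∀ γ ∈ Icc γl γr,
      |Ds s γ - ∑ i ∈ Finset.range (j + 2), D i γ / Real.sqrt s ^ i|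
        ≤ C / Real.sqrt s ^ (j + 2))
    (hD0cont : ContinuousOn (deriv (D 0)) (Icc γl γr))
    (hD0neg : ∀ γ ∈ Icc γl γr, deriv (D 0) γ < 0)
    (γ0 : ℝ) (hγ0 : γ0 ∈ Ioo γl γr) (hγ0sol : D 0 γ0 = ε)
    (γstar : ℕ → ℝ)
    (hγstar : ∀ s : ℕ, 1 ≤ s → γstar s ∈ Ioo γl γr ∧ Ds s (γstar s) = ε ∧
      ∀ γ ∈ Icc γl γr, Ds s γ = ε → γ = γstar s)
    (γj : ℕ → ℝ) (s1 : ℕ)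
    (hγj : ∀ s : ℕ, s1 ≤ s → γj s ∈ Icc γl γr ∧
      ∑ i ∈ Finset.range (j + 1), D i (γj s) / Real.sqrt s ^ i = ε ∧
      ∀ γ ∈ Icc γl γr,
        ∑ i ∈ Finset.range (j + 1), D i γ / Real.sqrt s ^ i = ε → γ = γj s) :
    ∃ (K : ℝ) (sj : ℕ), 0 ≤ K ∧ 1 ≤ sj ∧ ∀ s : ℕ, sj ≤ s →
      |γj s - γstar s| ≤ K / Real.sqrt s ^ (j + 1) :=
  stmt_6_general j ε γl γr Ds D hDdiff hDbdd hDj1bdd C happrox hD0cont hD0neg γstar hγstar γj s1 hγj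
end

section
/- There exist an integer s_0 ≥ 1 and a constant C ≥ 0 such that for every integer s ≥ s_0: the function A + E_s has a unique zero γ̄_s in the closed disk {z : |z| ≤ r}, and |γ̄_s + E_s(0)/A′(0)| ≤ C/s. -/
open Metric Filter Set

/-!
Write `A z = z * g z` with `g = dslope A 0`: it is holomorphic, and nonvanishing on the disk
because `0` is the only zero of `A` and is simple, so `‖g‖ ≥ m > 0` there. Roots of `A + E s` in
the disk are the fixed points of `Φ = -E s / g`, and `‖Φ‖ ≤ δ := c / (m √s)`. The Cauchy estimate
makes `Φ` Lipschitz with constant `2δ/r` on the half disk, a contraction once `δ < r/2`; every root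
already lies in the half disk since `m ‖z‖ ≤ ‖E s z‖`. Finally
`γ̄ + E s 0 / A' 0 = Φ γ̄ - Φ 0` has norm at most `(2δ/r) ‖γ̄‖ ≤ 2δ²/r = O(1/s)`.
-/

theorem IsCompact.exists_pos_forall_le_norm {X E : Type*} [TopologicalSpace X]
    [NormedAddCommGroup E] {K : Set X} (hK : IsCompact K) {f : X → E} (hf : ContinuousOn f K)
    (hf0 : ∀ x ∈ K, f x ≠ 0) : ∃ m > 0, ∀ x ∈ K, m ≤ ‖f x‖ := by
  rcases K.eq_empty_or_nonempty with rfl | hne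
  · exact ⟨1, one_pos, by simp⟩
  obtain ⟨x₀, hx₀, hmin⟩ := hK.exists_isMinOn hne hf.norm
  exact ⟨‖f x₀‖, norm_pos_iff.2 (hf0 x₀ hx₀), fun x hx => hmin hx⟩

theorem exists_unique_fixedPoint_of_dist_le_mul {α : Type*} [MetricSpace α] {s : Set α}
    (hs : IsComplete s) (hne : s.Nonempty) {f : α → α} (hmaps : MapsTo f s s) {K : ℝ}
    (hK : K < 1) (hf : ∀ x ∈ s, ∀ y ∈ s, dist (f x) (f y) ≤ K * dist x y) :
    ∃! x, x ∈ s ∧ f x = x := by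
  have hlip : LipschitzOnWith K.toNNReal f s := LipschitzOnWith.of_dist_le_mul fun x hx y hy =>
    (hf x hx y hy).trans (mul_le_mul_of_nonneg_right (Real.le_coe_toNNReal K) dist_nonneg)
  obtain ⟨x₀, hx₀⟩ := hne
  obtain ⟨x, hx, hfix, -⟩ := ContractingWith.exists_fixedPoint' hs hmaps
    ⟨Real.toNNReal_lt_one.2 hK, hlip.mapsToRestrict hmaps⟩ hx₀ (edist_ne_top _ _)
  refine ⟨x, ⟨hx, hfix⟩, fun y ⟨hy, hfy⟩ => dist_le_zero.1 ?_⟩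
  have := hf y hy x hx
  rw [hfy, hfix.eq] at this
  nlinarith [dist_nonneg (x := y) (y := x)]

theorem Complex.norm_sub_le_of_forall_norm_le_of_lt {F : Type*} [NormedAddCommGroup F]
    [NormedSpace ℂ F] {f : ℂ → F} {c : ℂ} {ρ R M : ℝ} (hρR : ρ < R)
    (hf : DifferentiableOn ℂ f (closedBall c R)) (hM : ∀ z ∈ closedBall c R, ‖f z‖ ≤ M)
    {x y : ℂ} (hx : x ∈ closedBall c ρ) (hy : y ∈ closedBall c ρ) :
    ‖f y - f x‖ ≤ M / (R - ρ) * ‖y - x‖ := by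
  have hsub : ∀ z ∈ closedBall c ρ, closedBall z (R - ρ) ⊆ closedBall c R := fun z hz =>
    closedBall_subset_closedBall' (by linarith [mem_closedBall.1 hz])
  refine (convex_closedBall c ρ).norm_image_sub_le_of_norm_deriv_le (fun z hz => ?_)
    (fun z hz => ?_) hx hy
  · exact hf.differentiableAt (closedBall_mem_nhds_of_mem (mem_ball.2
      ((mem_closedBall.1 hz).trans_lt hρR)))
  · refine Complex.norm_deriv_le_of_forall_mem_sphere_norm_le (by linarith) ?_ fun w hw =>
      hM w (hsub z hz (sphere_subset_closedBall hw))
    exact (hf.mono (closure_ball_subset_closedBall.trans (hsub z hz))).diffContOnCl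

theorem exists_unique_root_mul_add_of_norm_lt {g e : ℂ → ℂ} {r m ε : ℝ} (hr : 0 < r)
    (hg : DifferentiableOn ℂ g (closedBall 0 r)) (he : DifferentiableOn ℂ e (closedBall 0 r))
    (hm : 0 < m) (hgm : ∀ z ∈ closedBall (0 : ℂ) r, m ≤ ‖g z‖)
    (heε : ∀ z ∈ closedBall (0 : ℂ) r, ‖e z‖ ≤ ε) (hε : ε < m * r / 2) :
    ∃ γ ∈ closedBall (0 : ℂ) r, γ * g γ + e γ = 0 ∧
      (∀ z ∈ closedBall (0 : ℂ) r, z * g z + e z = 0 → z = γ) ∧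
      ‖γ + e 0 / g 0‖ ≤ 2 * ε ^ 2 / (m ^ 2 * r) := by
  have hg0 : ∀ z ∈ closedBall (0 : ℂ) r, g z ≠ 0 := fun z hz =>
    norm_pos_iff.1 (hm.trans_le (hgm z hz))
  set δ := ε / m
  have hδ0 : 0 ≤ δ := div_nonneg ((norm_nonneg _).trans (heε 0 (mem_closedBall_self hr.le))) hm.le
  have hδ : δ < r / 2 := by rw [div_lt_iff₀ hm]; linarith
  set Φ : ℂ → ℂ := fun z => -(e z / g z)
  have hΦ_le : ∀ z ∈ closedBall (0 : ℂ) r, ‖Φ z‖ ≤ δ := fun z hz => by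
    rw [norm_neg, norm_div]
    exact div_le_div₀ ((norm_nonneg _).trans (heε z hz)) (heε z hz) hm (hgm z hz)
  have hΦ_lip : ∀ x ∈ closedBall (0 : ℂ) (r / 2), ∀ y ∈ closedBall (0 : ℂ) (r / 2),
      ‖Φ y - Φ x‖ ≤ δ / (r / 2) * ‖y - x‖ := fun x hx y hy => by
    simpa only [sub_half] using
      Complex.norm_sub_le_of_forall_norm_le_of_lt (f := Φ) (half_lt_self hr) (he.div hg hg0).neg
        hΦ_le hx hy
  have hroot_iff : ∀ z ∈ closedBall (0 : ℂ) r, z * g z + e z = 0 ↔ Φ z = z := fun z hz => by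
    simp only [Φ, neg_eq_iff_eq_neg, div_eq_iff (hg0 z hz), ← eq_neg_iff_add_eq_zero]
    constructor <;> intro h <;> linear_combination h
  have hroot_small : ∀ z ∈ closedBall (0 : ℂ) r, z * g z + e z = 0 → z ∈ closedBall 0 (r / 2) :=
    fun z hz h => by
      rw [mem_closedBall_zero_iff, ← (hroot_iff z hz).1 h]
      exact (hΦ_le z hz).trans hδ.le
  have hhalf : closedBall (0 : ℂ) (r / 2) ⊆ closedBall 0 r :=
    closedBall_subset_closedBall (half_le_self hr.le)
  obtain ⟨γ, ⟨hγ, hγfix⟩, huniq⟩ := exists_unique_fixedPoint_of_dist_le_mul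
    (isCompact_closedBall 0 (r / 2)).isComplete ⟨0, mem_closedBall_self (half_pos hr).le⟩
    (fun z hz => mem_closedBall_zero_iff.2 ((hΦ_le z (hhalf hz)).trans hδ.le))
    (K := δ / (r / 2)) (by rw [div_lt_one (half_pos hr)]; exact hδ)
    (fun x hx y hy => by simpa only [dist_eq_norm] using hΦ_lip y hy x hx)
  refine ⟨γ, hhalf hγ, (hroot_iff γ (hhalf hγ)).2 hγfix, fun z hz h =>
    huniq z ⟨hroot_small z hz h, (hroot_iff z hz).1 h⟩, ?_⟩
  calc ‖γ + e 0 / g 0‖ = ‖Φ γ - Φ 0‖ := by simp [Φ, hγfix]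
    _ ≤ δ / (r / 2) * ‖γ‖ := by simpa using hΦ_lip 0 (mem_closedBall_self (half_pos hr).le) γ hγ
    _ ≤ δ / (r / 2) * δ := by
      gcongr
      rw [← hγfix]; exact hΦ_le γ (hhalf hγ)
    _ = 2 * ε ^ 2 / (m ^ 2 * r) := by simp only [δ]; field_simp

theorem stmt_10_general (r : ℝ) (hr : 0 < r) (A : ℂ → ℂ) (U : Set ℂ)
    (hUr : closedBall (0 : ℂ) r ⊆ U)
    (hA : AnalyticOnNhd ℂ A U)
    (hA0 : A 0 = 0) (hA'0 : deriv A 0 ≠ 0)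
    (hAzero : ∀ z ∈ closedBall (0 : ℂ) r, A z = 0 → z = 0)
    (E : ℕ → ℂ → ℂ) (hE : ∀ s : ℕ, 1 ≤ s → AnalyticOnNhd ℂ (E s) U)
    (c : ℝ)
    (hEbdd : ∀ s : ℕ, 1 ≤ s → ∀ z ∈ closedBall (0 : ℂ) r,
      ‖E s z‖ ≤ c / Real.sqrt s) :
    ∃ (s0 : ℕ) (C : ℝ), 1 ≤ s0 ∧ 0 ≤ C ∧ ∀ s : ℕ, s0 ≤ s →
      ∃ γbar ∈ closedBall (0 : ℂ) r,
        A γbar + E s γbar = 0 ∧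
        (∀ z ∈ closedBall (0 : ℂ) r, A z + E s z = 0 → z = γbar) ∧
        ‖γbar + E s 0 / deriv A 0‖ ≤ C / s := by
  set g := dslope A 0
  have hA_eq : ∀ z, A z = z * g z := fun z => by
    simpa [hA0, eq_comm] using sub_smul_dslope A 0 z
  have hg : DifferentiableOn ℂ g (closedBall 0 r) :=
    (Complex.differentiableOn_dslope (closedBall_mem_nhds 0 hr)).2 (hA.differentiableOn.mono hUr)
  have hg_ne : ∀ z ∈ closedBall (0 : ℂ) r, g z ≠ 0 := fun z hz hgz => by
    obtain rfl : z = 0 := hAzero z hz (by rw [hA_eq, hgz, mul_zero])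
    exact hA'0 (by rwa [← dslope_same])
  obtain ⟨m, hm, hgm⟩ :=
    (isCompact_closedBall (0 : ℂ) r).exists_pos_forall_le_norm hg.continuousOn hg_ne
  have h_small : ∀ᶠ s : ℕ in atTop, c / √s < m * r / 2 :=
    (tendsto_const_nhds.div_atTop (Real.tendsto_sqrt_atTop.comp
      tendsto_natCast_atTop_atTop)).eventually_lt_const (by positivity)
  obtain ⟨N, hN⟩ := eventually_atTop.1 (h_small.and (eventually_ge_atTop 1))
  refine ⟨max N 1, 2 * c ^ 2 / (m ^ 2 * r), le_max_right _ _, by positivity, fun s hs => ?_⟩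
  obtain ⟨hs_small, hs1⟩ := hN s (le_of_max_le_left hs)
  obtain ⟨γ, hγ, hroot, huniq, hest⟩ := exists_unique_root_mul_add_of_norm_lt hr hg
    ((hE s hs1).differentiableOn.mono hUr) hm hgm (hEbdd s hs1) hs_small
  refine ⟨γ, hγ, by rwa [hA_eq], fun z hz h => huniq z hz (by rwa [← hA_eq]), ?_⟩
  rw [← dslope_same]
  convert hest using 1
  rw [div_pow, Real.sq_sqrt s.cast_nonneg]
  ring

/-- First-order refinement: for the perturbed equation `A + E_s = 0` with
`sup |E_s| ≤ c/√s`, the unique root `γ̄_s` in the disk satisfies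
`γ̄_s = −E_s(0)/A′(0) + O(1/s)`. -/
theorem stmt_10 (r : ℝ) (hr : 0 < r) (A : ℂ → ℂ) (U : Set ℂ) (hU : IsOpen U)
    (hUr : closedBall (0 : ℂ) r ⊆ U)
    (hA : AnalyticOnNhd ℂ A U)
    (hA0 : A 0 = 0) (hA'0 : deriv A 0 ≠ 0)
    (hAzero : ∀ z ∈ closedBall (0 : ℂ) r, A z = 0 → z = 0)
    (E : ℕ → ℂ → ℂ) (hE : ∀ s : ℕ, 1 ≤ s → AnalyticOnNhd ℂ (E s) U)
    (c : ℝ)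
    (hEbdd : ∀ s : ℕ, 1 ≤ s → ∀ z ∈ closedBall (0 : ℂ) r,
      ‖E s z‖ ≤ c / Real.sqrt s) :
    ∃ (s0 : ℕ) (C : ℝ), 1 ≤ s0 ∧ 0 ≤ C ∧ ∀ s : ℕ, s0 ≤ s →
      ∃ γbar ∈ closedBall (0 : ℂ) r,
        A γbar + E s γbar = 0 ∧
        (∀ z ∈ closedBall (0 : ℂ) r, A z + E s z = 0 → z = γbar) ∧
        ‖γbar + E s 0 / deriv A 0‖ ≤ C / s :=
  stmt_10_general r hr A U hUr hA hA0 hA'0 hAzero E hE c hEbdd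
end

section
/- For every γ ∈ ℝ with γ ≠ 0, every η > 0, and all reals a, b, d, the limiting revenue rate under threshold admission control satisfies: ( ∫_{−∞}^{0} ((a+d)x + dγ) e^{−x²/2 − γx} dx + ∫_{0}^{η} (−bx + dγ) e^{−γx} dx ) / ( Φ(γ)/φ(γ) + ∫_{0}^{η} e^{−γx} dx ) = dγ − ( (a+d)(1 + γ Φ(γ)/φ(γ)) + b (1 − (1 + γη) e^{−γη})/γ² ) / ( Φ(γ)/φ(γ) + (1 − e^{−γη})/γ ). -/
/-!
Completing the square, `exp (-x ^ 2 / 2 - γ * x) = exp (γ ^ 2 / 2) * exp (-(x + γ) ^ 2 / 2)`, so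
translating by `γ` turns the Gaussian integral over `(-∞, 0]` into the Mills ratio `Φ(γ) / φ(γ)`,
while `(x + γ) * exp (-x ^ 2 / 2 - γ * x)` is an exact derivative and integrates to `-1`. The
integrals over `[0, η]` are elementary, and the denominator is positive (both of its terms are
integrals of positive functions), so the identity reduces to field arithmetic.
-/

open MeasureTheory intervalIntegral

/-- Standard normal cumulative distribution function. -/
noncomputable def stdPhi (γ : ℝ) : ℝ :=
  ∫ u in Set.Iic γ, Real.exp (-u ^ 2 / 2) / Real.sqrt (2 * Real.pi)

/-- Standard normal probability density function. -/
noncomputable def stdphi (γ : ℝ) : ℝ :=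
  Real.exp (-γ ^ 2 / 2) / Real.sqrt (2 * Real.pi)

open Filter Set Real

theorem setIntegral_Iic_comp_add_right {E : Type*} [NormedAddCommGroup E] [NormedSpace ℝ E]
    (f : ℝ → E) (b c : ℝ) : ∫ x in Iic b, f (x + c) = ∫ x in Iic (b + c), f x := by
  have h := (measurePreserving_add_right volume c).setIntegral_preimage_emb
    (measurableEmbedding_addRight c) f (Iic (b + c))
  simpa only [preimage_add_const_Iic, add_sub_cancel_right] using h

section TiltedGaussian

variable (γ : ℝ)

theorem exp_neg_sq_div_two_sub_mul (x : ℝ) :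
    exp (-x ^ 2 / 2 - γ * x) = exp (γ ^ 2 / 2) * exp (-(1 / 2) * (x + γ) ^ 2) := by
  rw [← exp_add]; ring_nf

theorem integrable_exp_neg_sq_div_two_sub_mul :
    Integrable fun x : ℝ ↦ exp (-x ^ 2 / 2 - γ * x) := by
  simpa only [exp_neg_sq_div_two_sub_mul] using
    ((integrable_exp_neg_mul_sq (by norm_num : (0 : ℝ) < 1 / 2)).comp_add_right γ).const_mul _

theorem integrable_add_mul_exp_neg_sq_div_two_sub_mul :
    Integrable fun x : ℝ ↦ (x + γ) * exp (-x ^ 2 / 2 - γ * x) := by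
  simpa only [exp_neg_sq_div_two_sub_mul, mul_left_comm _ (exp (γ ^ 2 / 2))] using
    ((integrable_mul_exp_neg_mul_sq (by norm_num : (0 : ℝ) < 1 / 2)).comp_add_right γ).const_mul _

theorem hasDerivAt_exp_neg_sq_div_two_sub_mul (x : ℝ) :
    HasDerivAt (fun x ↦ exp (-x ^ 2 / 2 - γ * x)) (-((x + γ) * exp (-x ^ 2 / 2 - γ * x))) x := by
  have h : HasDerivAt (fun x ↦ -x ^ 2 / 2 - γ * x) (-(x + γ)) x :=
    ((((hasDerivAt_pow 2 x).fun_neg).div_const 2).fun_sub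
      ((hasDerivAt_id' x).const_mul γ)).congr_deriv (by ring)
  exact h.exp.congr_deriv (by ring)

theorem tendsto_exp_neg_sq_div_two_sub_mul_atBot :
    Tendsto (fun x ↦ exp (-x ^ 2 / 2 - γ * x)) atBot (nhds 0) := by
  rw [tendsto_exp_comp_nhds_zero]
  have h : Tendsto (fun x : ℝ ↦ -x / 2 - γ) atBot atTop :=
    tendsto_atTop_add_const_right _ _ (tendsto_neg_atBot_atTop.atTop_div_const two_pos)
  exact (tendsto_id.atBot_mul_atTop₀ h).congr fun x ↦ by simp; ring

theorem setIntegral_Iic_zero_exp_neg_sq_div_two_sub_mul :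
    ∫ x in Iic (0 : ℝ), exp (-x ^ 2 / 2 - γ * x) = stdPhi γ / stdphi γ := by
  have hs : sqrt (2 * π) ≠ 0 := by positivity
  calc ∫ x in Iic (0 : ℝ), exp (-x ^ 2 / 2 - γ * x)
      = exp (γ ^ 2 / 2) * ∫ u in Iic γ, exp (-(1 / 2) * u ^ 2) := by
        simp only [exp_neg_sq_div_two_sub_mul, MeasureTheory.integral_const_mul,
          setIntegral_Iic_comp_add_right (fun u ↦ exp (-(1 / 2) * u ^ 2)), zero_add]
    _ = stdPhi γ / stdphi γ := by
        rw [stdPhi, stdphi, MeasureTheory.integral_div, div_div_div_cancel_right₀ hs, neg_div,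
          exp_neg, div_inv_eq_mul, mul_comm]
        ring_nf

theorem setIntegral_Iic_zero_add_mul_exp_neg_sq_div_two_sub_mul :
    ∫ x in Iic (0 : ℝ), (x + γ) * exp (-x ^ 2 / 2 - γ * x) = -1 := by
  have h := integral_Iic_of_hasDerivAt_of_tendsto' (a := 0)
    (fun x _ ↦ hasDerivAt_exp_neg_sq_div_two_sub_mul γ x)
    (integrable_add_mul_exp_neg_sq_div_two_sub_mul γ).neg.integrableOn
    (tendsto_exp_neg_sq_div_two_sub_mul_atBot γ)
  rw [MeasureTheory.integral_neg] at h
  norm_num at h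
  linarith

theorem stdPhi_div_stdphi_pos : 0 < stdPhi γ / stdphi γ := by
  rw [← setIntegral_Iic_zero_exp_neg_sq_div_two_sub_mul]
  have : NeZero (volume.restrict (Iic (0 : ℝ))) := ⟨by simp⟩
  exact integral_exp_pos (integrable_exp_neg_sq_div_two_sub_mul γ).integrableOn

theorem setIntegral_Iic_zero_linear_mul_exp_neg_sq_div_two_sub_mul (a d : ℝ) :
    ∫ x in Iic (0 : ℝ), ((a + d) * x + d * γ) * exp (-x ^ 2 / 2 - γ * x)
      = -(a + d) - a * γ * (stdPhi γ / stdphi γ) := by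
  have hsplit : (fun x ↦ ((a + d) * x + d * γ) * exp (-x ^ 2 / 2 - γ * x)) = fun x ↦
      (a + d) * ((x + γ) * exp (-x ^ 2 / 2 - γ * x)) - a * γ * exp (-x ^ 2 / 2 - γ * x) := by
    ext x; ring
  rw [hsplit,
    integral_sub (((integrable_add_mul_exp_neg_sq_div_two_sub_mul γ).const_mul _).integrableOn)
      (((integrable_exp_neg_sq_div_two_sub_mul γ).const_mul _).integrableOn),
    MeasureTheory.integral_const_mul, MeasureTheory.integral_const_mul,
    setIntegral_Iic_zero_add_mul_exp_neg_sq_div_two_sub_mul,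
    setIntegral_Iic_zero_exp_neg_sq_div_two_sub_mul]
  ring

end TiltedGaussian

section Exponential

variable {γ : ℝ} (η : ℝ)

theorem integral_exp_neg_mul (hγ : γ ≠ 0) :
    ∫ x in (0 : ℝ)..η, exp (-γ * x) = (1 - exp (-γ * η)) / γ := by
  rw [integral_comp_mul_left (fun x ↦ exp x) (neg_ne_zero.2 hγ), integral_exp, mul_zero, exp_zero,
    smul_eq_mul]
  field_simp
  ring

theorem integral_exp_neg_mul_pos (hη : 0 < η) : 0 < ∫ x in (0 : ℝ)..η, exp (-γ * x) :=
  intervalIntegral_pos_of_pos ((by fun_prop : Continuous _).intervalIntegrable _ _)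
    (fun x ↦ exp_pos _) hη

theorem integral_linear_mul_exp_neg_mul (hγ : γ ≠ 0) (b d : ℝ) :
    ∫ x in (0 : ℝ)..η, (-b * x + d * γ) * exp (-γ * x)
      = d * (1 - exp (-γ * η)) - b * (1 - (1 + γ * η) * exp (-γ * η)) / γ ^ 2 := by
  have hF : ∀ x ∈ uIcc (0 : ℝ) η,
      HasDerivAt (fun x ↦ exp (-γ * x) * (b * (1 + γ * x) / γ ^ 2 - d))
        ((-b * x + d * γ) * exp (-γ * x)) x := fun x _ ↦ by
    have hlin := (hasDerivAt_id' x).const_mul (-γ)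
    have hpoly := ((((hasDerivAt_id' x).const_mul γ).const_add 1).const_mul b).div_const (γ ^ 2)
    refine (hlin.exp.mul (hpoly.sub_const d)).congr_deriv ?_
    field_simp
    ring
  rw [integral_eq_sub_of_hasDerivAt hF ((by fun_prop : Continuous _).intervalIntegrable _ _),
    mul_zero, mul_zero, add_zero, exp_zero]
  ring

end Exponential

/-- Closed form of the limiting revenue rate under threshold admission control
(equation (10) of the paper). -/
theorem stmt_19 (γ : ℝ) (hγ : γ ≠ 0) (η : ℝ) (hη : 0 < η) (a b d : ℝ) :
    ((∫ x in Set.Iic (0 : ℝ), ((a + d) * x + d * γ) * Real.exp (-x ^ 2 / 2 - γ * x))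
        + ∫ x in (0 : ℝ)..η, (-b * x + d * γ) * Real.exp (-γ * x))
      / (stdPhi γ / stdphi γ + ∫ x in (0 : ℝ)..η, Real.exp (-γ * x))
    = d * γ
      - ((a + d) * (1 + γ * (stdPhi γ / stdphi γ))
          + b * (1 - (1 + γ * η) * Real.exp (-γ * η)) / γ ^ 2)
        / (stdPhi γ / stdphi γ + (1 - Real.exp (-γ * η)) / γ) := by
  have hD : 0 < stdPhi γ / stdphi γ + ∫ x in (0 : ℝ)..η, exp (-γ * x) :=
    add_pos (stdPhi_div_stdphi_pos γ) (integral_exp_neg_mul_pos η hη)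
  rw [integral_exp_neg_mul η hγ] at hD ⊢
  rw [setIntegral_Iic_zero_linear_mul_exp_neg_sq_div_two_sub_mul,
    integral_linear_mul_exp_neg_mul η hγ, div_eq_iff hD.ne', sub_mul, div_mul_cancel₀ _ hD.ne']
  field_simp
  ring
end
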